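/- Let θ ∈ ℝ be a quadratic irrationality, i.e., θ is irrational and there exist integers A, B, C with A ≠ 0 and Aθ² + Bθ + C = 0. Then there exists a matrix g = [[a,b],[c,d]] ∈ SL₂(ℤ) with g ≠ I, g ≠ −I and (aθ + b)/(cθ + d) = θ. -/

import Mathlib

/-!
A root `θ` of `A X² + B X + C` is fixed by `x I + y [[-B, -2C], [2A, B]]` for all integers `x, y`,
since `[[-B, -2C], [2A, B]]` maps `(θ, 1)` to `(2Aθ + B) (θ, 1)`. The determinant of this matrix is
`x² - D y²` with `D = B² - 4AC`, and `D = (2Aθ + B)²` is a positive non-square when `θ` is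
irrational, so Pell's equation `x² - D y² = 1` has a solution with `y ≠ 0`, which gives `g ≠ ±I`.
-/

open Matrix

theorem Irrational.intCast_pos_of_sq_eq {ξ : ℝ} (hξ : Irrational ξ) {D : ℤ} (h : ξ ^ 2 = D) :
    0 < D := by
  have := hξ.ne_zero
  have : (0 : ℝ) < D := h ▸ by positivity
  exact_mod_cast this

theorem Irrational.not_isSquare_of_sq_eq {ξ : ℝ} (hξ : Irrational ξ) {D : ℤ} (h : ξ ^ 2 = D) :
    ¬IsSquare D := by
  rintro ⟨m, rfl⟩
  have : ξ ^ 2 = (m : ℝ) ^ 2 := by rw [h]; push_cast; ring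
  rcases sq_eq_sq_iff_eq_or_eq_neg.mp this with h' | h'
  · exact hξ.ne_int m h'
  · exact hξ.ne_int (-m) (by rw [h']; push_cast; rfl)

theorem intCast_discrim_eq_sq_of_quadratic_eq_zero {θ : ℝ} {A B C : ℤ}
    (hquad : (A : ℝ) * θ ^ 2 + (B : ℝ) * θ + (C : ℝ) = 0) :
    ((discrim A B C : ℤ) : ℝ) = (2 * A * θ + B) ^ 2 := by
  have := discrim_eq_sq_of_quadratic_eq_zero (a := (A : ℝ)) (b := B) (c := C) (x := θ)
    (by linear_combination hquad)
  rw [← this, discrim, discrim]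
  push_cast
  ring

def pellMatrix (A B C x y : ℤ) (hpell : x ^ 2 - discrim A B C * y ^ 2 = 1) :
    SpecialLinearGroup (Fin 2) ℤ :=
  ⟨!![x - B * y, -2 * C * y; 2 * A * y, x + B * y], by
    rw [det_fin_two_of, ← hpell, discrim]; ring⟩

section pellMatrix

variable {A B C x y : ℤ} (hpell : x ^ 2 - discrim A B C * y ^ 2 = 1)

theorem pellMatrix_apply_one_zero : (pellMatrix A B C x y hpell).1 1 0 = 2 * A * y := rfl

theorem pellMatrix_ne_one (hA : A ≠ 0) (hy : y ≠ 0) : pellMatrix A B C x y hpell ≠ 1 := by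
  intro h
  have := congrArg (fun g : SpecialLinearGroup (Fin 2) ℤ => g.1 1 0) h
  simp [pellMatrix_apply_one_zero, hA, hy] at this

theorem pellMatrix_ne_neg_one (hA : A ≠ 0) (hy : y ≠ 0) : pellMatrix A B C x y hpell ≠ -1 := by
  intro h
  have := congrArg (fun g : SpecialLinearGroup (Fin 2) ℤ => g.1 1 0) h
  simp [pellMatrix_apply_one_zero, hA, hy] at this

theorem pellMatrix_fixes {θ : ℝ} (hθ : Irrational θ) (hA : A ≠ 0) (hy : y ≠ 0)
    (hquad : (A : ℝ) * θ ^ 2 + (B : ℝ) * θ + (C : ℝ) = 0) :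
    let g := pellMatrix A B C x y hpell
    ((g.1 0 0 : ℝ) * θ + (g.1 0 1 : ℝ)) / ((g.1 1 0 : ℝ) * θ + (g.1 1 1 : ℝ)) = θ := by
  have hden : ((2 * A * y : ℤ) : ℝ) * θ + ((x + B * y : ℤ) : ℝ) ≠ 0 :=
    ((hθ.intCast_mul (by simp [hA, hy])).add_intCast _).ne_zero
  simp only [pellMatrix, of_apply, cons_val', cons_val_zero, cons_val_one, empty_val',
    cons_val_fin_one]
  rw [div_eq_iff hden]
  push_cast
  linear_combination (-2 * (y : ℝ)) * hquad

end pellMatrix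

/-- If `θ` is a quadratic irrationality then there exists a matrix
`g ∈ SL₂(ℤ)`, `g ≠ ±I`, fixing `θ` under the action by fractional linear
transformations. -/
theorem exists_sl2_fixing_quadratic_irrational
    (θ : ℝ) (hθ : Irrational θ)
    (A B C : ℤ) (hA : A ≠ 0)
    (hquad : (A : ℝ) * θ ^ 2 + (B : ℝ) * θ + (C : ℝ) = 0) :
    ∃ g : Matrix.SpecialLinearGroup (Fin 2) ℤ, g ≠ 1 ∧ g ≠ -1 ∧
      ((g.1 0 0 : ℝ) * θ + (g.1 0 1 : ℝ)) / ((g.1 1 0 : ℝ) * θ + (g.1 1 1 : ℝ)) = θ := by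
  have hξ : Irrational (2 * A * θ + B) := by
    simpa using (hθ.intCast_mul (mul_ne_zero two_ne_zero hA)).add_intCast B
  have hD := (intCast_discrim_eq_sq_of_quadratic_eq_zero hquad).symm
  obtain ⟨x, y, hpell, hy⟩ :=
    Pell.exists_of_not_isSquare (hξ.intCast_pos_of_sq_eq hD) (hξ.not_isSquare_of_sq_eq hD)
  exact ⟨pellMatrix A B C x y hpell, pellMatrix_ne_one hpell hA hy,
    pellMatrix_ne_neg_one hpell hA hy, pellMatrix_fixes hpell hθ hA hy hquad⟩
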